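/- Let K be a field and b, c ∈ K such that the Kubert-Tate curve E(b,c) has nonzero discriminant and b ≠ c. Then in the group of K-rational points of E(b,c), one has 5·(0,0) = ( bc(c² + c − b)/(b−c)² , bc²(b² − bc − c³)/(b−c)³ ). -/

import Mathlib

/-- The Kubert-Tate normal form curve E(b,c) : y^2 + (1-c)xy - by = x^3 - bx^2. -/
def Ebc {K : Type*} [CommRing K] (b c : K) : WeierstrassCurve.Affine K :=
  { a₁ := 1 - c, a₂ := -b, a₃ := -b, a₄ := 0, a₆ := 0 }
/-- The point (0, 0) on E(b,c), nonsingular since the discriminant is nonzero. -/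
noncomputable def P₀ {K : Type*} [Field K] (b c : K) (hΔ : (Ebc b c).Δ ≠ 0) :
    (Ebc b c).Point :=
  .some _ _ ((WeierstrassCurve.Affine.equation_iff_nonsingular_of_Δ_ne_zero (W := Ebc b c) hΔ).mp
    ((Ebc b c).equation_zero.mpr rfl))

/-! Each multiple is computed by one chord-tangent step, `5 • P = 2 • P + 3 • P` with
`2 • P = (b, bc)` and `3 • P = 2 • P + P = (c, b - c)`; the slopes of the three lines are `0`, `c`
and `(bc - b + c) / (b - c)`. -/

open WeierstrassCurve.Affine

lemma WeierstrassCurve.Affine.Point.exists_some_add_some_eq_some {F : Type*} [Field F]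
    [DecidableEq F] {W : WeierstrassCurve.Affine F} {x₁ x₂ y₁ y₂ x₃ y₃ ℓ : F}
    {h₁ : W.Nonsingular x₁ y₁} {h₂ : W.Nonsingular x₂ y₂}
    (hxy : ¬(x₁ = x₂ ∧ y₁ = W.negY x₂ y₂)) (hℓ : W.slope x₁ x₂ y₁ y₂ = ℓ)
    (hx : W.addX x₁ x₂ ℓ = x₃) (hy : W.addY x₁ x₂ y₁ ℓ = y₃) :
    ∃ h₃ : W.Nonsingular x₃ y₃, some _ _ h₁ + some _ _ h₂ = some _ _ h₃ := by
  subst hℓ hx hy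
  exact ⟨_, add_some hxy⟩

namespace Ebc

variable {K : Type*} [Field K] {b c : K}

lemma Δ_eq (b c : K) : (Ebc b c).Δ =
    b ^ 3 * (16 * b ^ 2 - 8 * b * c ^ 2 - 20 * b * c + b + c * (c - 1) ^ 3) := by
  simp only [Ebc, WeierstrassCurve.Δ, WeierstrassCurve.b₂, WeierstrassCurve.b₄,
    WeierstrassCurve.b₆, WeierstrassCurve.b₈]
  ring

lemma b_ne_zero (hΔ : (Ebc b c).Δ ≠ 0) : b ≠ 0 := by
  rw [Δ_eq] at hΔ
  exact pow_ne_zero_iff three_ne_zero |>.mp (left_ne_zero_of_mul hΔ)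

variable [DecidableEq K]

lemma two_nsmul_P₀ (hΔ : (Ebc b c).Δ ≠ 0) :
    ∃ h : (Ebc b c).Nonsingular b (b * c), 2 • P₀ b c hΔ = .some _ _ h := by
  have hb := b_ne_zero hΔ
  have hy : (0 : K) ≠ (Ebc b c).negY 0 0 := by simpa [Ebc, negY] using hb.symm
  rw [two_nsmul, P₀]
  refine Point.exists_some_add_some_eq_some (ℓ := 0) (fun h => hy h.2) ?_ ?_ ?_
  · rw [slope_of_Y_ne rfl hy]
    simp [Ebc]
  · simp [Ebc]
  · simp only [addY, negAddY, addX, negY, Ebc]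
    ring

lemma three_nsmul_P₀ (hΔ : (Ebc b c).Δ ≠ 0) :
    ∃ h : (Ebc b c).Nonsingular c (b - c), 3 • P₀ b c hΔ = .some _ _ h := by
  have hb := b_ne_zero hΔ
  obtain ⟨h₂, e₂⟩ := two_nsmul_P₀ hΔ
  rw [succ_nsmul, e₂, P₀]
  refine Point.exists_some_add_some_eq_some (ℓ := c) (fun h => hb h.1) ?_ ?_ ?_
  · rw [slope_of_X_ne hb]
    field_simp
    ring
  · simp only [addX, Ebc]
    ring
  · simp only [addY, negAddY, addX, negY, Ebc]
    ring

end Ebc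

open Classical in
theorem stmt_4 {K : Type*} [Field K] (b c : K) (hΔ : (Ebc b c).Δ ≠ 0) (hbc : b ≠ c) :
    ∃ h : (Ebc b c).Nonsingular (b * c * (c ^ 2 + c - b) / (b - c) ^ 2)
        (b * c ^ 2 * (b ^ 2 - b * c - c ^ 3) / (b - c) ^ 3),
      5 • P₀ b c hΔ = WeierstrassCurve.Affine.Point.some _ _ h := by
  have hbc' : b - c ≠ 0 := sub_ne_zero.mpr hbc
  obtain ⟨h₂, e₂⟩ := Ebc.two_nsmul_P₀ hΔ
  obtain ⟨h₃, e₃⟩ := Ebc.three_nsmul_P₀ hΔ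
  rw [show 5 = 2 + 3 from rfl, add_nsmul, e₂, e₃]
  refine Point.exists_some_add_some_eq_some (ℓ := (b * c - b + c) / (b - c))
    (fun h => hbc h.1) ?_ ?_ ?_
  · rw [slope_of_X_ne hbc, div_eq_div_iff hbc' hbc']
    ring
  · simp only [addX, Ebc]
    field_simp
    ring
  · simp only [addY, negAddY, addX, negY, Ebc]
    field_simp
    ring
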